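/- Let 𝓗 be a complex Hilbert space, H : ℝ → (𝓗 →L[ℂ] 𝓗) a twice differentiable family of bounded self-adjoint operators, E : ℝ → ℝ twice differentiable, and χ : ℝ → 𝓗 twice differentiable with ‖χ(k)‖ = 1 and H(k)χ(k) = E(k)·χ(k) for every k ∈ ℝ. Then for every k ∈ ℝ: E''(k) = ⟨χ(k), H''(k) χ(k)⟩ + 2 Re ⟨(H'(k) − E'(k)·Id) χ(k), χ'(k)⟩. -/

import Mathlib

/-!
Pairing the derivative of the eigenvalue equation `H χ = E χ` with `χ`, symmetry of `H` cancels
the `χ'` terms and leaves the Hellmann–Feynman identity `E' = ⟪χ, H' χ⟫`. Differentiating it once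
more, `H'` is again symmetric, so the two `χ'` terms combine to `2 Re ⟪H' χ, χ'⟫`; subtracting
`E' χ` changes nothing because `Re ⟪χ, χ'⟫ = 0` when `‖χ‖` is constant.
-/

open ContinuousLinearMap
open scoped InnerProductSpace ComplexConjugate

theorem HasDerivAt.clm_apply_restrictScalars {𝕜 E F : Type*} [NontriviallyNormedField 𝕜]
    [NormedAlgebra ℝ 𝕜] [NormedAddCommGroup E] [NormedSpace 𝕜 E] [NormedSpace ℝ E]
    [IsScalarTower ℝ 𝕜 E] [NormedAddCommGroup F] [NormedSpace 𝕜 F] [NormedSpace ℝ F]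
    [IsScalarTower ℝ 𝕜 F] {c : ℝ → E →L[𝕜] F} {c' : E →L[𝕜] F} {u : ℝ → E} {u' : E} {t : ℝ}
    (hc : HasDerivAt c c' t) (hu : HasDerivAt u u' t) :
    HasDerivAt (fun k => c k (u k)) (c' (u t) + c t u') t := by
  simpa using ((restrictScalarsL 𝕜 E F ℝ ℝ).hasFDerivAt.comp_hasDerivAt t hc).clm_apply hu

section Eigenvector

variable {E : Type*} [NormedAddCommGroup E] [InnerProductSpace ℂ E]

theorem LinearMap.IsSymmetric.of_hasDerivAt {A : ℝ → E →L[ℂ] E} {A' : E →L[ℂ] E} {t : ℝ}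
    (hA : ∀ k, (A k : E →ₗ[ℂ] E).IsSymmetric) (hA' : HasDerivAt A A' t) :
    (A' : E →ₗ[ℂ] E).IsSymmetric := by
  intro x y
  have hleft := (hA'.clm_apply_restrictScalars (hasDerivAt_const t x)).inner ℂ
    (hasDerivAt_const t y)
  have hright := (hasDerivAt_const t x).inner ℂ
    (hA'.clm_apply_restrictScalars (hasDerivAt_const t y))
  simp only [inner_zero_left, inner_zero_right, map_zero, add_zero, zero_add] at hleft hright
  rw [show (fun k => ⟪A k x, y⟫_ℂ) = fun k => ⟪x, A k y⟫_ℂ from funext fun k => hA k x y] at hleft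
  exact hleft.unique hright

theorem re_inner_eq_zero_of_hasDerivAt_of_norm_eq {χ : ℝ → E} {χ' : E} {t c : ℝ}
    (hχ : HasDerivAt χ χ' t) (hnorm : ∀ k, ‖χ k‖ = c) :
    (⟪χ t, χ'⟫_ℂ).re = 0 := by
  have hderiv := hχ.inner ℂ hχ
  rw [show (fun k => ⟪χ k, χ k⟫_ℂ) = fun _ => (c : ℂ) ^ 2 from
    funext fun k => by rw [inner_self_eq_norm_sq_to_K, hnorm k]; rfl] at hderiv
  have hsum := congrArg Complex.re ((hasDerivAt_const t _).unique hderiv)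
  rw [Complex.zero_re, Complex.add_re, ← inner_conj_symm χ' (χ t), Complex.conj_re] at hsum
  linarith

theorem hellmann_feynman {H : ℝ → E →L[ℂ] E} {H' : E →L[ℂ] E} {μ : ℝ → ℝ} {μ' : ℝ}
    {χ : ℝ → E} {χ' : E} {t : ℝ} (hsym : (H t : E →ₗ[ℂ] E).IsSymmetric)
    (hH : HasDerivAt H H' t) (hμ : HasDerivAt μ μ' t) (hχ : HasDerivAt χ χ' t)
    (heig : ∀ k, H k (χ k) = (μ k : ℂ) • χ k) :
    ⟪χ t, H' (χ t)⟫_ℂ = μ' * ‖χ t‖ ^ 2 := by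
  have hderiv := hH.clm_apply_restrictScalars hχ
  rw [funext heig] at hderiv
  have hdiff := congrArg (⟪χ t, ·⟫_ℂ) (hderiv.unique (hμ.ofReal_comp.smul hχ))
  have hHχ' : ⟪χ t, H t χ'⟫_ℂ = μ t * ⟪χ t, χ'⟫_ℂ := by
    rw [← coe_coe, ← hsym, coe_coe, heig, inner_smul_left, Complex.conj_ofReal]
  simp only [inner_add_right, inner_smul_right, inner_self_eq_norm_sq_to_K, hHχ'] at hdiff
  linear_combination hdiff

end Eigenvector

theorem second_deriv_eigenvalue_general {𝓗 : Type*} [NormedAddCommGroup 𝓗]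
    [InnerProductSpace ℂ 𝓗] [CompleteSpace 𝓗]
    (H H' H'' : ℝ → 𝓗 →L[ℂ] 𝓗) (E E' E'' : ℝ → ℝ) (χ χ' : ℝ → 𝓗)
    (hHsa : ∀ k, IsSelfAdjoint (H k))
    (hH : ∀ k, HasDerivAt H (H' k) k) (hH' : ∀ k, HasDerivAt H' (H'' k) k)
    (hE : ∀ k, HasDerivAt E (E' k) k) (hE' : ∀ k, HasDerivAt E' (E'' k) k)
    (hχ : ∀ k, HasDerivAt χ (χ' k) k)
    (hnorm : ∀ k, ‖χ k‖ = 1)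
    (heig : ∀ k, H k (χ k) = (E k : ℂ) • χ k) :
    ∀ k : ℝ,
      (E'' k : ℂ) = (inner ℂ (χ k) (H'' k (χ k)) : ℂ)
        + 2 * (((inner ℂ ((H' k - (E' k : ℂ) • (1 : 𝓗 →L[ℂ] 𝓗)) (χ k)) (χ' k) : ℂ).re : ℂ)) := by
  intro k
  have hfirst : (fun k => ⟪χ k, H' k (χ k)⟫_ℂ) = fun k => (E' k : ℂ) := funext fun k => by
    rw [hellmann_feynman (hHsa k).isSymmetric (hH k) (hE k) (hχ k) heig, hnorm k]
    norm_num
  have hH'sym : ⟪H' k (χ k), χ' k⟫_ℂ = ⟪χ k, H' k (χ' k)⟫_ℂ :=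
    LinearMap.IsSymmetric.of_hasDerivAt (fun k => (hHsa k).isSymmetric) (hH k) _ _
  have hsecond : (E'' k : ℂ) =
      ⟪χ k, H'' k (χ k)⟫_ℂ + ⟪H' k (χ k), χ' k⟫_ℂ + conj ⟪H' k (χ k), χ' k⟫_ℂ := by
    have hderiv := (hχ k).inner ℂ ((hH' k).clm_apply_restrictScalars (hχ k))
    rw [hfirst] at hderiv
    rw [(hE' k).ofReal_comp.unique hderiv, inner_add_right, ← hH'sym, ← inner_conj_symm (χ' k)]
  have hshift : (⟪(H' k - (E' k : ℂ) • (1 : 𝓗 →L[ℂ] 𝓗)) (χ k), χ' k⟫_ℂ).re =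
      (⟪H' k (χ k), χ' k⟫_ℂ).re := by
    rw [sub_apply, smul_apply, one_apply_eq_self, inner_sub_left, inner_smul_left,
      Complex.conj_ofReal, Complex.sub_re, Complex.re_ofReal_mul,
      re_inner_eq_zero_of_hasDerivAt_of_norm_eq (hχ k) hnorm, mul_zero, sub_zero]
  rw [hshift, hsecond]
  linear_combination -2 * Complex.re_eq_add_conj ⟪H' k (χ k), χ' k⟫_ℂ

/-- second-derivative formula for the eigenvalue of a twice
differentiable family of bounded self-adjoint operators:
`E''(k) = ⟨χ(k), H''(k) χ(k)⟩ + 2 Re ⟨(H'(k) - E'(k)·Id) χ(k), χ'(k)⟩`. -/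
theorem second_deriv_eigenvalue {𝓗 : Type*} [NormedAddCommGroup 𝓗]
    [InnerProductSpace ℂ 𝓗] [CompleteSpace 𝓗]
    (H H' H'' : ℝ → 𝓗 →L[ℂ] 𝓗) (E E' E'' : ℝ → ℝ) (χ χ' χ'' : ℝ → 𝓗)
    (hHsa : ∀ k, IsSelfAdjoint (H k))
    (hH : ∀ k, HasDerivAt H (H' k) k) (hH' : ∀ k, HasDerivAt H' (H'' k) k)
    (hE : ∀ k, HasDerivAt E (E' k) k) (hE' : ∀ k, HasDerivAt E' (E'' k) k)
    (hχ : ∀ k, HasDerivAt χ (χ' k) k) (hχ' : ∀ k, HasDerivAt χ' (χ'' k) k)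
    (hnorm : ∀ k, ‖χ k‖ = 1)
    (heig : ∀ k, H k (χ k) = (E k : ℂ) • χ k) :
    ∀ k : ℝ,
      (E'' k : ℂ) = (inner ℂ (χ k) (H'' k (χ k)) : ℂ)
        + 2 * (((inner ℂ ((H' k - (E' k : ℂ) • (1 : 𝓗 →L[ℂ] 𝓗)) (χ k)) (χ' k) : ℂ).re : ℂ)) :=
  second_deriv_eigenvalue_general H H' H'' E E' E'' χ χ' hHsa hH hH' hE hE' hχ hnorm heig
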